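/- arXiv:2212.00927 — 2 statements merged into one kernel-verified Lean document; each statement's English description precedes it below -/
import Mathlib

section
/- Summed weighted gap bound for the switching subgradient iteration. Let Z ⊆ ℝ^d be nonempty, closed and convex, let μ > 0, τ > 0, L₀ ≥ 0, L₁ ≥ 0, let F, G : ℝ^d → ℝ, and let z* ∈ Z. Define α_t = 2/(μ(t+2) + L₁²/(μ(t+1))). Suppose sequences z : ℕ → Z and ζ : ℕ → ℝ^d satisfy, for every t ∈ ℕ: if G(z_t) ≤ τ then ζ_t is a μ-strong subgradient of F at z_t over Z with ‖ζ_t‖² ≤ L₀² + L₁(F(z_t) − F(z*)), while if G(z_t) > τ then ζ_t is a μ-strong subgradient of G at z_t over Z with ‖ζ_t‖² ≤ L₀² + L₁(G(z_t) − G(z*)); and z_{t+1} = proj_Z(z_t − α_t ζ_t). Then for every T ∈ ℕ, Σ_{t < T, G(z_t) ≤ τ} (t+1)(F(z_t) − F(z*)) + Σ_{t < T, G(z_t) > τ} (t+1)(G(z_t) − G(z*)) ≤ 2L₀²T/μ + L₁²‖z₀ − z*‖²/(2μ). -/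
open RealInnerProductSpace Finset

/-!
Write `a_t = μ (t + 1)`, `K_t = 2 / α_t = a_t + μ + L1² / a_t`, `D_t = ‖z_t - z*‖²` and `h_t` for the
gap of whichever function is active at step `t`. Strong convexity, the bound on `‖ζ_t‖²` and the
projection inequality give `K_t² D_{t+1} ≤ K_t (K_t - 2μ) D_t - 4 (K_t - L1) h_t + 4 L0²`.
Multiplying by `w_t / K_t` with `w_t = a_t + min a_t (2 L1)` turns this into
`4 a_t h_t + w_t K_t D_{t+1} ≤ w_t (K_t - 2μ) D_t + 8 L0²`: the weight is large enough for a
nonnegative gap, and capped so that a negative gap, about which only `L1 h_t ≥ -L0²` is known,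
costs no more than the slack in `8 L0²`. Since `w_{t+1} (K_{t+1} - 2μ) ≤ w_t K_t`, the potential
`w_t (K_t - 2μ) D_t` telescopes; it starts below `2 L1² D_0`.
-/

noncomputable def invStepSize (μ L1 a : ℝ) : ℝ := a + μ + L1 ^ 2 / a

def gapWeight (L1 a : ℝ) : ℝ := a + min a (2 * L1)

noncomputable def potentialCoeff (μ L1 a : ℝ) : ℝ :=
  gapWeight L1 a * (invStepSize μ L1 a - 2 * μ)

section Scalar

variable {μ L1 a : ℝ}

lemma two_mul_add_le_invStepSize (ha : 0 < a) :
    2 * L1 + μ ≤ invStepSize μ L1 a := by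
  have h : L1 ^ 2 / a * a = L1 ^ 2 := div_mul_cancel₀ _ ha.ne'
  have h2 : 2 * L1 ≤ a + L1 ^ 2 / a := by
    refine le_of_mul_le_mul_right ?_ ha
    nlinarith [sq_nonneg (a - L1)]
  unfold invStepSize
  linarith

lemma gapWeight_mul_le (hμ : 0 ≤ μ) (hL1 : 0 ≤ L1) (ha : 0 < a) :
    gapWeight L1 a * L1 ≤ min a (2 * L1) * invStepSize μ L1 a := by
  have hK := two_mul_add_le_invStepSize (μ := μ) (L1 := L1) ha
  have hKa : a ≤ invStepSize μ L1 a := by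
    unfold invStepSize; linarith [div_nonneg (sq_nonneg L1) ha.le]
  unfold gapWeight
  rcases min_choice a (2 * L1) with hn | hn <;> rw [hn]
  · nlinarith
  · nlinarith [min_le_left a (2 * L1)]

lemma potentialCoeff_add_le (hμ : 0 < μ) (hL1 : 0 ≤ L1) (ha : 0 < a) :
    potentialCoeff μ L1 (a + μ) ≤ gapWeight L1 a * invStepSize μ L1 a := by
  have haμ : 0 < a + μ := by linarith
  have hX : invStepSize μ L1 (a + μ) - 2 * μ = a + L1 ^ 2 / (a + μ) := by
    unfold invStepSize; ring
  have e1 : L1 ^ 2 / (a + μ) * (a + μ) = L1 ^ 2 := div_mul_cancel₀ _ haμ.ne'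
  have e2 : L1 ^ 2 / a * a = L1 ^ 2 := div_mul_cancel₀ _ ha.ne'
  unfold potentialCoeff gapWeight
  rw [hX]
  unfold invStepSize
  rcases min_choice a (2 * L1) with hn | hn <;> rw [hn]
  · calc (a + μ + min (a + μ) (2 * L1)) * (a + L1 ^ 2 / (a + μ))
        ≤ (2 * (a + μ)) * (a + L1 ^ 2 / (a + μ)) := by
          gcongr; linarith [min_le_left (a + μ) (2 * L1)]
      _ = (a + a) * (a + μ + L1 ^ 2 / a) := by
          field_simp; ring
  · have hmono : L1 ^ 2 / (a + μ) ≤ L1 ^ 2 / a := by gcongr; linarith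
    calc (a + μ + min (a + μ) (2 * L1)) * (a + L1 ^ 2 / (a + μ))
        ≤ (a + μ + 2 * L1) * (a + L1 ^ 2 / (a + μ)) := by
          gcongr; exact min_le_right _ _
      _ ≤ (a + 2 * L1) * (a + μ + L1 ^ 2 / a) := by
          nlinarith [mul_le_mul_of_nonneg_left hmono hL1, mul_nonneg hμ.le hL1]

lemma potentialCoeff_self_le (hμ : 0 < μ) :
    potentialCoeff μ L1 μ ≤ 2 * L1 ^ 2 := by
  have hX : invStepSize μ L1 μ - 2 * μ = L1 ^ 2 / μ := by unfold invStepSize; ring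
  unfold potentialCoeff gapWeight
  rw [hX]
  calc (μ + min μ (2 * L1)) * (L1 ^ 2 / μ) ≤ (2 * μ) * (L1 ^ 2 / μ) := by
        gcongr; linarith [min_le_left μ (2 * L1)]
    _ = 2 * L1 ^ 2 := by field_simp

lemma potentialCoeff_nonneg (hμ : 0 < μ) (hL1 : 0 ≤ L1) (ha : μ ≤ a) :
    0 ≤ potentialCoeff μ L1 a := by
  have ha0 : 0 < a := by linarith
  unfold potentialCoeff gapWeight invStepSize
  have : 0 ≤ min a (2 * L1) := le_min ha0.le (by linarith)
  have : 0 ≤ L1 ^ 2 / a := by positivity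
  apply mul_nonneg <;> linarith

lemma weighted_descent_step {L0 h D D' : ℝ} (hμ : 0 < μ) (hL1 : 0 ≤ L1) (ha : 0 < a)
    (hh : 0 ≤ L0 ^ 2 + L1 * h)
    (hD : D' ≤ (1 - 2 / invStepSize μ L1 a * μ) * D
      - 2 / invStepSize μ L1 a * (2 - 2 / invStepSize μ L1 a * L1) * h
      + (2 / invStepSize μ L1 a) ^ 2 * L0 ^ 2) :
    4 * a * h + gapWeight L1 a * invStepSize μ L1 a * D' ≤
      potentialCoeff μ L1 a * D + 8 * L0 ^ 2 := by
  have hK2 := two_mul_add_le_invStepSize (μ := μ) (L1 := L1) ha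
  have hKa : a ≤ invStepSize μ L1 a := by
    unfold invStepSize; linarith [div_nonneg (sq_nonneg L1) ha.le]
  have hwL1 := gapWeight_mul_le hμ.le hL1 ha
  set K := invStepSize μ L1 a
  have hK : 0 < K := by linarith
  have hscaled : 4 * (K - L1) * h + K ^ 2 * D' ≤ K * (K - 2 * μ) * D + 4 * L0 ^ 2 := by
    have := mul_le_mul_of_nonneg_left hD (sq_nonneg K)
    have e : K ^ 2 * ((1 - 2 / K * μ) * D - 2 / K * (2 - 2 / K * L1) * h + (2 / K) ^ 2 * L0 ^ 2)
        = K * (K - 2 * μ) * D - 4 * (K - L1) * h + 4 * L0 ^ 2 := by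
      field_simp; ring
    linarith
  unfold gapWeight at hwL1
  set n := min a (2 * L1)
  have hn0 : 0 ≤ n := le_min ha.le (by linarith)
  have hn : n ≤ 2 * L1 := min_le_right _ _
  have hslack : ((a + n) * L1 - n * K) * h ≤ (2 * K - (a + n)) * L0 ^ 2 := by
    rcases le_or_gt 0 h with hh0 | hh0
    · nlinarith [min_le_left a (2 * L1)]
    · nlinarith [mul_le_mul_of_nonneg_right hn (mul_nonneg hK.le (neg_nonneg.2 hh0.le)),
        min_le_left a (2 * L1)]
  refine le_of_mul_le_mul_left ?_ hK
  unfold potentialCoeff gapWeight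
  linear_combination (a + n) * hscaled + 4 * hslack

end Scalar

section Descent

variable {E : Type*} [NormedAddCommGroup E] [InnerProductSpace ℝ E]

lemma sub_add_le_inner_of_strong_subgradient {f : E → ℝ} {Z : Set E} {μ : ℝ} {x y ζ : E}
    (hf : ∀ y ∈ Z, f y ≥ f x + ⟪ζ, y - x⟫ + μ / 2 * ‖y - x‖ ^ 2) (hy : y ∈ Z) :
    f x - f y + μ / 2 * ‖x - y‖ ^ 2 ≤ ⟪ζ, x - y⟫ := by
  have := hf y hy
  rw [← neg_sub x y, inner_neg_right, norm_neg] at this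
  linarith

lemma sq_norm_sub_le_of_inner_nonpos {w p y : E} (h : ⟪w - p, y - p⟫ ≤ 0) :
    ‖p - y‖ ^ 2 ≤ ‖w - y‖ ^ 2 := by
  have e : w - y = (w - p) - (y - p) := by abel
  rw [e, norm_sub_sq_real (w - p), ← norm_neg (p - y), neg_sub]
  nlinarith [sq_nonneg ‖w - p‖]

lemma projected_step_descent {x x' y ζ : E} {α μ L0 L1 h : ℝ} (hα : 0 ≤ α)
    (hproj : ⟪(x - α • ζ) - x', y - x'⟫ ≤ 0)
    (hsub : h + μ / 2 * ‖x - y‖ ^ 2 ≤ ⟪ζ, x - y⟫) (hζ : ‖ζ‖ ^ 2 ≤ L0 ^ 2 + L1 * h) :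
    ‖x' - y‖ ^ 2 ≤ (1 - α * μ) * ‖x - y‖ ^ 2 - α * (2 - α * L1) * h + α ^ 2 * L0 ^ 2 := by
  have hexp : ‖(x - α • ζ) - y‖ ^ 2 = ‖x - y‖ ^ 2 - 2 * α * ⟪ζ, x - y⟫ + α ^ 2 * ‖ζ‖ ^ 2 := by
    rw [sub_right_comm, norm_sub_sq_real, inner_smul_right, norm_smul, real_inner_comm,
      mul_pow, Real.norm_eq_abs, sq_abs]
    ring
  have := sq_norm_sub_le_of_inner_nonpos hproj
  nlinarith [mul_le_mul_of_nonneg_left hsub hα, mul_le_mul_of_nonneg_left hζ (sq_nonneg α)]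

lemma potential_step {x x' y ζ : E} {μ L0 L1 a h : ℝ} (hμ : 0 < μ) (hL1 : 0 ≤ L1) (ha : 0 < a)
    (hproj : ⟪(x - (2 / invStepSize μ L1 a) • ζ) - x', y - x'⟫ ≤ 0)
    (hsub : h + μ / 2 * ‖x - y‖ ^ 2 ≤ ⟪ζ, x - y⟫) (hζ : ‖ζ‖ ^ 2 ≤ L0 ^ 2 + L1 * h) :
    4 * a * h + potentialCoeff μ L1 (a + μ) * ‖x' - y‖ ^ 2 ≤
      potentialCoeff μ L1 a * ‖x - y‖ ^ 2 + 8 * L0 ^ 2 := by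
  have hK : 0 < invStepSize μ L1 a := by unfold invStepSize; positivity
  have hstep := weighted_descent_step hμ hL1 ha (le_trans (sq_nonneg _) hζ)
    (projected_step_descent (by positivity) hproj hsub hζ)
  have hcoeff := mul_le_mul_of_nonneg_right (potentialCoeff_add_le hμ hL1 ha)
    (sq_nonneg ‖x' - y‖)
  linarith

end Descent

lemma sum_range_add_le_of_potential {u Φ : ℕ → ℝ} {c : ℝ}
    (h : ∀ t, u t + Φ (t + 1) ≤ Φ t + c) (T : ℕ) :
    ∑ t ∈ range T, u t + Φ T ≤ Φ 0 + T * c := by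
  induction T with
  | zero => simp
  | succ T ih =>
    rw [sum_range_succ]
    push_cast
    linarith [h T]

lemma weighted_sum_le_of_potential {g Φ : ℕ → ℝ} {μ L0 L1 D₀ : ℝ} (hμ : 0 < μ)
    (hstep : ∀ t : ℕ, 4 * μ * ((t + 1) * g t) + Φ (t + 1) ≤ Φ t + 8 * L0 ^ 2)
    (hΦ₀ : Φ 0 ≤ 2 * L1 ^ 2 * D₀) (hΦ : ∀ t, 0 ≤ Φ t) (T : ℕ) :
    ∑ t ∈ range T, ((t : ℝ) + 1) * g t ≤ 2 * L0 ^ 2 * T / μ + L1 ^ 2 * D₀ / (2 * μ) := by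
  have hsum := sum_range_add_le_of_potential hstep T
  rw [← mul_sum] at hsum
  calc _ ≤ (8 * L0 ^ 2 * T + 2 * L1 ^ 2 * D₀) / (4 * μ) := by
        rw [le_div_iff₀ (by positivity)]; linarith [hΦ T]
    _ = _ := by field_simp; ring

theorem summed_weighted_gap_bound_general {d : ℕ}
    (Z : Set (EuclideanSpace ℝ (Fin d)))
    (μ τ L0 L1 : ℝ) (hμ : 0 < μ) (hL1 : 0 ≤ L1)
    (F G : EuclideanSpace ℝ (Fin d) → ℝ)
    (zs : EuclideanSpace ℝ (Fin d)) (hzs : zs ∈ Z)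
    (α : ℕ → ℝ)
    (hα : ∀ t : ℕ, α t = 2 / (μ * ((t : ℝ) + 2) + L1 ^ 2 / (μ * ((t : ℝ) + 1))))
    (z ζ : ℕ → EuclideanSpace ℝ (Fin d))
    (hstepF : ∀ t, G (z t) ≤ τ →
      (∀ y ∈ Z, F y ≥ F (z t) + ⟪ζ t, y - z t⟫ + μ / 2 * ‖y - z t‖ ^ 2) ∧
      ‖ζ t‖ ^ 2 ≤ L0 ^ 2 + L1 * (F (z t) - F zs))
    (hstepG : ∀ t, τ < G (z t) →
      (∀ y ∈ Z, G y ≥ G (z t) + ⟪ζ t, y - z t⟫ + μ / 2 * ‖y - z t‖ ^ 2) ∧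
      ‖ζ t‖ ^ 2 ≤ L0 ^ 2 + L1 * (G (z t) - G zs))
    (hproj : ∀ t, ∀ y ∈ Z, ⟪(z t - α t • ζ t) - z (t + 1), y - z (t + 1)⟫ ≤ 0)
    (T : ℕ) :
    ∑ t ∈ (Finset.range T).filter (fun t => G (z t) ≤ τ),
        ((t : ℝ) + 1) * (F (z t) - F zs)
      + ∑ t ∈ (Finset.range T).filter (fun t => τ < G (z t)),
          ((t : ℝ) + 1) * (G (z t) - G zs)
      ≤ 2 * L0 ^ 2 * (T : ℝ) / μ + L1 ^ 2 * ‖z 0 - zs‖ ^ 2 / (2 * μ) := by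
  classical
  set gap : ℕ → ℝ := fun t => if G (z t) ≤ τ then F (z t) - F zs else G (z t) - G zs
  have hgap : ∀ t, gap t + μ / 2 * ‖z t - zs‖ ^ 2 ≤ ⟪ζ t, z t - zs⟫ ∧
      ‖ζ t‖ ^ 2 ≤ L0 ^ 2 + L1 * gap t := by
    intro t
    by_cases hG : G (z t) ≤ τ
    · obtain ⟨hsub, hζ⟩ := hstepF t hG
      simp only [gap, if_pos hG]
      exact ⟨sub_add_le_inner_of_strong_subgradient hsub hzs, hζ⟩
    · obtain ⟨hsub, hζ⟩ := hstepG t (lt_of_not_ge hG)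
      simp only [gap, if_neg hG]
      exact ⟨sub_add_le_inner_of_strong_subgradient hsub hzs, hζ⟩
  set Φ : ℕ → ℝ := fun t => potentialCoeff μ L1 (μ * (t + 1)) * ‖z t - zs‖ ^ 2
  have hstep : ∀ t : ℕ, 4 * μ * ((t + 1) * gap t) + Φ (t + 1) ≤ Φ t + 8 * L0 ^ 2 := by
    intro t
    have hαt : α t = 2 / invStepSize μ L1 (μ * (t + 1)) := by
      rw [hα, invStepSize]; ring_nf
    have hnext : μ * (((t + 1 : ℕ) : ℝ) + 1) = μ * (t + 1) + μ := by push_cast; ring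
    have hprojt := hproj t zs hzs
    rw [hαt] at hprojt
    have := potential_step hμ hL1 (by positivity) hprojt (hgap t).1 (hgap t).2
    simp only [Φ, hnext]
    linarith
  have hsplit : ∑ t ∈ (Finset.range T).filter (fun t => G (z t) ≤ τ),
        ((t : ℝ) + 1) * (F (z t) - F zs)
      + ∑ t ∈ (Finset.range T).filter (fun t => τ < G (z t)),
          ((t : ℝ) + 1) * (G (z t) - G zs) = ∑ t ∈ range T, ((t : ℝ) + 1) * gap t := by
    simp only [gap, mul_ite, sum_ite, not_le]
  rw [hsplit]
  refine weighted_sum_le_of_potential hμ hstep ?_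
    (fun t => mul_nonneg (potentialCoeff_nonneg hμ hL1 (le_mul_of_one_le_right hμ.le (by simp)))
      (sq_nonneg _)) T
  simpa [Φ] using mul_le_mul_of_nonneg_right (potentialCoeff_self_le (L1 := L1) hμ)
    (sq_nonneg ‖z 0 - zs‖)

/-- Summed weighted gap bound for the switching subgradient iteration. -/
theorem summed_weighted_gap_bound {d : ℕ}
    (Z : Set (EuclideanSpace ℝ (Fin d)))
    (hZne : Z.Nonempty) (hZcl : IsClosed Z) (hZconv : Convex ℝ Z)
    (μ τ L0 L1 : ℝ) (hμ : 0 < μ) (hτ : 0 < τ) (hL0 : 0 ≤ L0) (hL1 : 0 ≤ L1)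
    (F G : EuclideanSpace ℝ (Fin d) → ℝ)
    (zs : EuclideanSpace ℝ (Fin d)) (hzs : zs ∈ Z)
    (α : ℕ → ℝ)
    (hα : ∀ t : ℕ, α t = 2 / (μ * ((t : ℝ) + 2) + L1 ^ 2 / (μ * ((t : ℝ) + 1))))
    (z ζ : ℕ → EuclideanSpace ℝ (Fin d))
    (hzmem : ∀ t, z t ∈ Z)
    (hstepF : ∀ t, G (z t) ≤ τ →
      (∀ y ∈ Z, F y ≥ F (z t) + ⟪ζ t, y - z t⟫ + μ / 2 * ‖y - z t‖ ^ 2) ∧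
      ‖ζ t‖ ^ 2 ≤ L0 ^ 2 + L1 * (F (z t) - F zs))
    (hstepG : ∀ t, τ < G (z t) →
      (∀ y ∈ Z, G y ≥ G (z t) + ⟪ζ t, y - z t⟫ + μ / 2 * ‖y - z t‖ ^ 2) ∧
      ‖ζ t‖ ^ 2 ≤ L0 ^ 2 + L1 * (G (z t) - G zs))
    (hproj : ∀ t, ∀ y ∈ Z, ⟪(z t - α t • ζ t) - z (t + 1), y - z (t + 1)⟫ ≤ 0)
    (T : ℕ) :
    ∑ t ∈ (Finset.range T).filter (fun t => G (z t) ≤ τ),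
        ((t : ℝ) + 1) * (F (z t) - F zs)
      + ∑ t ∈ (Finset.range T).filter (fun t => τ < G (z t)),
          ((t : ℝ) + 1) * (G (z t) - G zs)
      ≤ 2 * L0 ^ 2 * (T : ℝ) / μ + L1 ^ 2 * ‖z 0 - zs‖ ^ 2 / (2 * μ) :=
  summed_weighted_gap_bound_general Z μ τ L0 L1 hμ hL1 F G zs hzs α hα z ζ hstepF hstepG hproj T
end

section
/- Theorem 3 (outer-loop convergence to KKT stationarity under bounded multipliers). Let X ⊆ ℝ^d be convex, let 0 ≤ ρ < ρ̂ with ρ̂ > 1, set μ = ρ̂ − ρ, let ε > 0 and B ≥ 0, and set τ = (ρ̂ − ρ)ε²/(4(1+B)²ρ̂(2ρ̂ − ρ)). Let f, g : ℝ^d → ℝ with f(x) ≥ f_lb for all x ∈ X for some f_lb ∈ ℝ. Suppose sequences x : ℕ → X, x̂ : ℕ → X, λ : ℕ → ℝ, ζ_F, ζ_G, ν : ℕ → ℝ^d satisfy: g(x₀) ≤ 0; and for every k ∈ ℕ, with F_k(x) = f(x) + (ρ̂/2)‖x − x_k‖² and G_k(x) = g(x) + (ρ̂/2)‖x − x_k‖²: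 0 ≤ λ(k) ≤ B; ζ_F(k) is a μ-strong subgradient of F_k at x̂_{k+1} over X; ζ_G(k) is a μ-strong subgradient of G_k at x̂_{k+1} over X; ν(k) ∈ N_X(x̂_{k+1}); ζ_F(k) + λ(k)ζ_G(k) + ν(k) = 0; λ(k)·G_k(x̂_{k+1}) = 0; G_k(x̂_{k+1}) ≤ 0; F_k(x_{k+1}) ≤ F_k(x̂_{k+1}) + τ; and G_k(x_{k+1}) ≤ τ. Then there exists K ∈ ℕ with K ≤ 4(1+B)ρ̂²(f(x₀) − f_lb)/((ρ̂ − ρ)ε²) such that g(x_K) ≤ 0 and ‖x̂_{K+1} − x_K‖ ≤ ε/(ρ̂(1+λ(K))) (so that x_K is an (ε, ε)-KKT point of minimizing f over {x ∈ X : g(x) ≤ 0}). -/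
/-!
The KKT conditions at `x̂ = x̂_{k+1}`, with `μ`-strong convexity of `F_k` and `G_k`, give the
quadratic growth `F_k(x̂) + (1 + λ) (μ/2) ‖y - x̂‖² ≤ F_k(y) + λ G_k(y)` on `X`. At `y = x_{k+1}`
it puts the inexact iterate within `√(2τ/μ)` of `x̂`; at `y = x_k` it shows that, as long as the
step `‖x̂ - x_k‖` exceeds `ε / (ρ̂ (1 + λ))`, the next iterate stays feasible and `f` drops by
`(ρ̂ - ρ) ε² / (4 (1 + B) ρ̂²)`. Since `f` is bounded below on `X`, a short step must occur.
-/

open RealInnerProductSpace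

section Inner

variable {E : Type*} [SeminormedAddCommGroup E] [InnerProductSpace ℝ E]

def IsStrongSubgradientOn (μ : ℝ) (h : E → ℝ) (X : Set E) (x ζ : E) : Prop :=
  ∀ y ∈ X, h x + ⟪ζ, y - x⟫ + μ / 2 * ‖y - x‖ ^ 2 ≤ h y

def normalCone (X : Set E) (x : E) : Set E := {ν | ∀ y ∈ X, ⟪ν, y - x⟫ ≤ 0}

lemma quadratic_growth_of_kkt {F G : E → ℝ} {X : Set E} {z ζF ζG ν y : E} {μ lam : ℝ}
    (hF : IsStrongSubgradientOn μ F X z ζF) (hG : IsStrongSubgradientOn μ G X z ζG)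
    (hν : ν ∈ normalCone X z) (hlam : 0 ≤ lam) (hsum : ζF + lam • ζG + ν = 0)
    (hcomp : lam * G z = 0) (hy : y ∈ X) :
    F z + (1 + lam) * (μ / 2) * ‖y - z‖ ^ 2 ≤ F y + lam * G y := by
  have hinner : ⟪ζF, y - z⟫ + lam * ⟪ζG, y - z⟫ + ⟪ν, y - z⟫ = 0 := by
    rw [← real_inner_smul_left, ← inner_add_left, ← inner_add_left, hsum, inner_zero_left]
  have hGy := mul_le_mul_of_nonneg_left (hG y hy) hlam
  linarith [hF y hy, hν y hy]

end Inner

section ProximalStep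

variable {E : Type*} [SeminormedAddCommGroup E]

noncomputable def proxObjective (h : E → ℝ) (ρ' : ℝ) (c y : E) : ℝ :=
  h y + ρ' / 2 * ‖y - c‖ ^ 2

@[simp]
lemma proxObjective_self (h : E → ℝ) (ρ' : ℝ) (c : E) : proxObjective h ρ' c c = h c := by
  simp [proxObjective]

lemma le_norm_sub_sq_of_le_norm_sub {a b c : E} {A σ β : ℝ} (hA : 0 ≤ A)
    (hσ : ‖a - b‖ ^ 2 ≤ σ) (hAb : A ≤ ‖b - c‖) (h : 2 * (σ + β) ≤ A ^ 2) :
    β ≤ ‖a - c‖ ^ 2 := by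
  have htri : ‖b - c‖ ≤ ‖a - b‖ + ‖a - c‖ := by
    simpa only [norm_sub_rev b a] using norm_sub_le_norm_sub_add_norm_sub b a c
  have hsq : A ^ 2 ≤ (‖a - b‖ + ‖a - c‖) ^ 2 := pow_le_pow_left₀ hA (hAb.trans htri) 2
  linarith [add_sq_le (a := ‖a - b‖) (b := ‖a - c‖)]

lemma norm_sub_sq_le_of_near_optimal {F G : E → ℝ} {z y : E} {μ lam τ : ℝ} (hlam : 0 ≤ lam)
    (hgrowth : F z + (1 + lam) * (μ / 2) * ‖y - z‖ ^ 2 ≤ F y + lam * G y)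
    (hF : F y ≤ F z + τ) (hG : G y ≤ τ) : μ / 2 * ‖y - z‖ ^ 2 ≤ τ := by
  have hGτ := mul_le_mul_of_nonneg_left hG hlam
  have h : (1 + lam) * (μ / 2 * ‖y - z‖ ^ 2) ≤ (1 + lam) * τ := by linarith
  exact le_of_mul_le_mul_left h (by linarith)

variable {ρ ρ' ε B lam τ : ℝ}

/-- The tolerance `τ` is calibrated for this identity: with `(a + b)² ≤ 2 (a² + b²)` it gives
`√(2τ/(ρ' - ρ)) + √(2τ/ρ') ≤ ε / (ρ' (1 + B))`. -/
lemma two_mul_tolerance_sum (hρ' : 0 < ρ') (hρ : ρ < ρ') (hB : 0 ≤ B)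
    (hτ : τ = (ρ' - ρ) * ε ^ 2 / (4 * (1 + B) ^ 2 * ρ' * (2 * ρ' - ρ))) :
    2 * (2 * τ / (ρ' - ρ) + 2 * τ / ρ') = (ε / (ρ' * (1 + B))) ^ 2 := by
  have : ρ' - ρ ≠ 0 := by linarith
  have : 2 * ρ' - ρ ≠ 0 := by linarith
  have : 1 + B ≠ 0 := by linarith
  subst hτ
  field_simp
  ring

lemma tolerance_le_decrease (hρ' : 0 < ρ') (hρ : ρ < ρ') (hB : 0 ≤ B)
    (hτ : τ = (ρ' - ρ) * ε ^ 2 / (4 * (1 + B) ^ 2 * ρ' * (2 * ρ' - ρ))) :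
    τ ≤ (ρ' - ρ) * ε ^ 2 / (4 * (1 + B) * ρ' ^ 2) := by
  subst hτ
  have hρB : ρ' ≤ (1 + B) * (2 * ρ' - ρ) := by nlinarith
  apply div_le_div_of_nonneg_left (mul_nonneg (by linarith) (sq_nonneg ε)) (by positivity)
  calc 4 * (1 + B) * ρ' ^ 2 = 4 * (1 + B) * ρ' * ρ' := by ring
    _ ≤ 4 * (1 + B) * ρ' * ((1 + B) * (2 * ρ' - ρ)) := by gcongr
    _ = 4 * (1 + B) ^ 2 * ρ' * (2 * ρ' - ρ) := by ring

lemma feasible_of_long_step {g : E → ℝ} {x z x' : E} (hρ' : 0 < ρ') (hρ : ρ < ρ')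
    (hε : 0 ≤ ε) (hlam : 0 ≤ lam) (hlamB : lam ≤ B)
    (hτ : τ = (ρ' - ρ) * ε ^ 2 / (4 * (1 + B) ^ 2 * ρ' * (2 * ρ' - ρ)))
    (hclose : (ρ' - ρ) / 2 * ‖x' - z‖ ^ 2 ≤ τ) (hG : proxObjective g ρ' x x' ≤ τ)
    (hlong : ε / (ρ' * (1 + lam)) < ‖z - x‖) : g x' ≤ 0 := by
  have hB : 0 ≤ B := hlam.trans hlamB
  have hstep : ε / (ρ' * (1 + B)) ≤ ‖z - x‖ :=
    (div_le_div_of_nonneg_left hε (by positivity) (by gcongr)).trans hlong.le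
  have hσ : ‖x' - z‖ ^ 2 ≤ 2 * τ / (ρ' - ρ) := by
    rw [le_div_iff₀ (by linarith)]
    linarith
  have hβ : 2 * τ / ρ' ≤ ‖x' - x‖ ^ 2 :=
    le_norm_sub_sq_of_le_norm_sub (by positivity) hσ hstep
      (two_mul_tolerance_sum hρ' hρ hB hτ).le
  rw [div_le_iff₀ hρ'] at hβ
  unfold proxObjective at hG
  linarith

lemma descent_of_long_step {f g : E → ℝ} {x z x' : E} (hρ' : 0 < ρ') (hρ : ρ < ρ')
    (hε : 0 ≤ ε) (hlam : 0 ≤ lam) (hlamB : lam ≤ B)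
    (hτ : τ = (ρ' - ρ) * ε ^ 2 / (4 * (1 + B) ^ 2 * ρ' * (2 * ρ' - ρ)))
    (hgrowth : proxObjective f ρ' x z + (1 + lam) * ((ρ' - ρ) / 2) * ‖x - z‖ ^ 2 ≤
      proxObjective f ρ' x x + lam * proxObjective g ρ' x x)
    (hgx : g x ≤ 0) (hF : proxObjective f ρ' x x' ≤ proxObjective f ρ' x z + τ)
    (hlong : ε / (ρ' * (1 + lam)) < ‖z - x‖) :
    f x' + (ρ' - ρ) * ε ^ 2 / (4 * (1 + B) * ρ' ^ 2) ≤ f x := by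
  have hB : 0 ≤ B := hlam.trans hlamB
  have hμ : 0 ≤ (ρ' - ρ) / 2 := by linarith
  have hsq : (ε / (ρ' * (1 + lam))) ^ 2 ≤ ‖x - z‖ ^ 2 := by
    rw [norm_sub_rev]
    exact pow_le_pow_left₀ (by positivity) hlong.le 2
  have hdecrease : 2 * ((ρ' - ρ) * ε ^ 2 / (4 * (1 + B) * ρ' ^ 2)) ≤
      (1 + lam) * ((ρ' - ρ) / 2) * ‖x - z‖ ^ 2 :=
    calc 2 * ((ρ' - ρ) * ε ^ 2 / (4 * (1 + B) * ρ' ^ 2))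
        = (ρ' - ρ) * ε ^ 2 / (2 * ρ' ^ 2 * (1 + B)) := by field_simp; ring
      _ ≤ (ρ' - ρ) * ε ^ 2 / (2 * ρ' ^ 2 * (1 + lam)) := by gcongr
      _ = (1 + lam) * ((ρ' - ρ) / 2) * (ε / (ρ' * (1 + lam))) ^ 2 := by
        field_simp
      _ ≤ (1 + lam) * ((ρ' - ρ) / 2) * ‖x - z‖ ^ 2 := by gcongr
  have hτc := tolerance_le_decrease hρ' hρ hB hτ
  have hlg : lam * g x ≤ 0 := mul_nonpos_of_nonneg_of_nonpos hlam hgx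
  simp only [proxObjective_self] at hgrowth
  unfold proxObjective at hgrowth hF
  linarith [show 0 ≤ ρ' / 2 * ‖x' - x‖ ^ 2 by positivity]

end ProximalStep

lemma exists_stop_of_sufficient_decrease {a : ℕ → ℝ} {P Q : ℕ → Prop} {c lb : ℝ} (hc : 0 < c)
    (hlb : ∀ k, lb ≤ a k) (hQ₀ : Q 0)
    (hstep : ∀ k, Q k → ¬ P k → Q (k + 1) ∧ a (k + 1) + c ≤ a k) :
    ∃ K : ℕ, (K : ℝ) ≤ (a 0 - lb) / c ∧ Q K ∧ P K := by
  classical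
  have hrun : ∀ n, (∀ j < n, ¬ P j) → Q n ∧ a n + n * c ≤ a 0 := by
    intro n
    induction n with
    | zero => simp [hQ₀]
    | succ n ih =>
      intro hnP
      obtain ⟨hQn, hn⟩ := ih fun j hj => hnP j (Nat.lt_succ_of_lt hj)
      obtain ⟨hQ, ha⟩ := hstep n hQn (hnP n n.lt_succ_self)
      refine ⟨hQ, ?_⟩
      push_cast
      linarith
  have hex : ∃ k, P k := by
    by_contra! hnP
    obtain ⟨n, hn⟩ := exists_nat_gt ((a 0 - lb) / c)
    rw [div_lt_iff₀ hc] at hn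
    linarith [(hrun n fun j _ => hnP j).2, hlb n]
  obtain ⟨hQK, hK⟩ := hrun (Nat.find hex) fun j hj => Nat.find_min hex hj
  refine ⟨Nat.find hex, ?_, hQK, Nat.find_spec hex⟩
  rw [le_div_iff₀ hc]
  linarith [hlb (Nat.find hex)]

theorem outer_loop_convergence_KKT_general {d : ℕ}
    (X : Set (EuclideanSpace ℝ (Fin d)))
    (ρ ρ' μ ε B τ flb : ℝ) (hρρ' : ρ < ρ') (hρ' : 1 < ρ')
    (hμ : μ = ρ' - ρ) (hε : 0 < ε) (hB : 0 ≤ B)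
    (hτ : τ = (ρ' - ρ) * ε ^ 2 / (4 * (1 + B) ^ 2 * ρ' * (2 * ρ' - ρ)))
    (f g : EuclideanSpace ℝ (Fin d) → ℝ)
    (hflb : ∀ x ∈ X, flb ≤ f x)
    (x xh : ℕ → EuclideanSpace ℝ (Fin d))
    (hx : ∀ k, x k ∈ X)
    (lam : ℕ → ℝ) (ζF ζG ν : ℕ → EuclideanSpace ℝ (Fin d))
    (hg0 : g (x 0) ≤ 0)
    (hlam : ∀ k, 0 ≤ lam k) (hlamB : ∀ k, lam k ≤ B)
    (hζF : ∀ k, ∀ y ∈ X,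
      f y + ρ' / 2 * ‖y - x k‖ ^ 2 ≥
        (f (xh (k + 1)) + ρ' / 2 * ‖xh (k + 1) - x k‖ ^ 2)
        + ⟪ζF k, y - xh (k + 1)⟫ + μ / 2 * ‖y - xh (k + 1)‖ ^ 2)
    (hζG : ∀ k, ∀ y ∈ X,
      g y + ρ' / 2 * ‖y - x k‖ ^ 2 ≥
        (g (xh (k + 1)) + ρ' / 2 * ‖xh (k + 1) - x k‖ ^ 2)
        + ⟪ζG k, y - xh (k + 1)⟫ + μ / 2 * ‖y - xh (k + 1)‖ ^ 2)
    (hν : ∀ k, ∀ y ∈ X, ⟪ν k, y - xh (k + 1)⟫ ≤ 0)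
    (heq : ∀ k, ζF k + lam k • ζG k + ν k = 0)
    (hcomp : ∀ k, lam k * (g (xh (k + 1)) + ρ' / 2 * ‖xh (k + 1) - x k‖ ^ 2) = 0)
    (hFnear : ∀ k, f (x (k + 1)) + ρ' / 2 * ‖x (k + 1) - x k‖ ^ 2 ≤
      (f (xh (k + 1)) + ρ' / 2 * ‖xh (k + 1) - x k‖ ^ 2) + τ)
    (hGnear : ∀ k, g (x (k + 1)) + ρ' / 2 * ‖x (k + 1) - x k‖ ^ 2 ≤ τ) :
    ∃ K : ℕ, (K : ℝ) ≤ 4 * (1 + B) * ρ' ^ 2 * (f (x 0) - flb) / ((ρ' - ρ) * ε ^ 2) ∧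
      g (x K) ≤ 0 ∧ ‖xh (K + 1) - x K‖ ≤ ε / (ρ' * (1 + lam K)) := by
  subst hμ
  have hρ'₀ : 0 < ρ' := by linarith
  have hgrowth k {y} (hy : y ∈ X) :=
    quadratic_growth_of_kkt (F := proxObjective f ρ' (x k)) (G := proxObjective g ρ' (x k))
      (hζF k) (hζG k) (hν k) (hlam k) (heq k) (hcomp k) hy
  have hdecrease : 0 < (ρ' - ρ) * ε ^ 2 / (4 * (1 + B) * ρ' ^ 2) := by
    have : 0 < ρ' - ρ := by linarith
    positivity
  obtain ⟨K, hK, hgK, hshort⟩ := exists_stop_of_sufficient_decrease hdecrease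
    (a := fun k => f (x k)) (Q := fun k => g (x k) ≤ 0)
    (P := fun k => ‖xh (k + 1) - x k‖ ≤ ε / (ρ' * (1 + lam k)))
    (fun k => hflb _ (hx k)) hg0 fun k hgk hlong => by
      rw [not_le] at hlong
      have hclose := norm_sub_sq_le_of_near_optimal (hlam k) (hgrowth k (hx (k + 1)))
        (hFnear k) (hGnear k)
      exact ⟨feasible_of_long_step hρ'₀ hρρ' hε.le (hlam k) (hlamB k) hτ hclose (hGnear k) hlong,
        descent_of_long_step hρ'₀ hρρ' hε.le (hlam k) (hlamB k) hτ (hgrowth k (hx k)) hgk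
          (hFnear k) hlong⟩
  refine ⟨K, ?_, hgK, hshort⟩
  rwa [div_div_eq_mul_div, mul_comm] at hK

/-- Theorem 3: outer-loop convergence to KKT stationarity under bounded multipliers. -/
theorem outer_loop_convergence_KKT {d : ℕ}
    (X : Set (EuclideanSpace ℝ (Fin d))) (hX : Convex ℝ X)
    (ρ ρ' μ ε B τ flb : ℝ) (hρ : 0 ≤ ρ) (hρρ' : ρ < ρ') (hρ' : 1 < ρ')
    (hμ : μ = ρ' - ρ) (hε : 0 < ε) (hB : 0 ≤ B)
    (hτ : τ = (ρ' - ρ) * ε ^ 2 / (4 * (1 + B) ^ 2 * ρ' * (2 * ρ' - ρ)))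
    (f g : EuclideanSpace ℝ (Fin d) → ℝ)
    (hflb : ∀ x ∈ X, flb ≤ f x)
    (x xh : ℕ → EuclideanSpace ℝ (Fin d))
    (hx : ∀ k, x k ∈ X) (hxh : ∀ k, xh k ∈ X)
    (lam : ℕ → ℝ) (ζF ζG ν : ℕ → EuclideanSpace ℝ (Fin d))
    (hg0 : g (x 0) ≤ 0)
    (hlam : ∀ k, 0 ≤ lam k) (hlamB : ∀ k, lam k ≤ B)
    (hζF : ∀ k, ∀ y ∈ X,
      f y + ρ' / 2 * ‖y - x k‖ ^ 2 ≥
        (f (xh (k + 1)) + ρ' / 2 * ‖xh (k + 1) - x k‖ ^ 2)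
        + ⟪ζF k, y - xh (k + 1)⟫ + μ / 2 * ‖y - xh (k + 1)‖ ^ 2)
    (hζG : ∀ k, ∀ y ∈ X,
      g y + ρ' / 2 * ‖y - x k‖ ^ 2 ≥
        (g (xh (k + 1)) + ρ' / 2 * ‖xh (k + 1) - x k‖ ^ 2)
        + ⟪ζG k, y - xh (k + 1)⟫ + μ / 2 * ‖y - xh (k + 1)‖ ^ 2)
    (hν : ∀ k, ∀ y ∈ X, ⟪ν k, y - xh (k + 1)⟫ ≤ 0)
    (heq : ∀ k, ζF k + lam k • ζG k + ν k = 0)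
    (hcomp : ∀ k, lam k * (g (xh (k + 1)) + ρ' / 2 * ‖xh (k + 1) - x k‖ ^ 2) = 0)
    (hGxh : ∀ k, g (xh (k + 1)) + ρ' / 2 * ‖xh (k + 1) - x k‖ ^ 2 ≤ 0)
    (hFnear : ∀ k, f (x (k + 1)) + ρ' / 2 * ‖x (k + 1) - x k‖ ^ 2 ≤
      (f (xh (k + 1)) + ρ' / 2 * ‖xh (k + 1) - x k‖ ^ 2) + τ)
    (hGnear : ∀ k, g (x (k + 1)) + ρ' / 2 * ‖x (k + 1) - x k‖ ^ 2 ≤ τ) :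
    ∃ K : ℕ, (K : ℝ) ≤ 4 * (1 + B) * ρ' ^ 2 * (f (x 0) - flb) / ((ρ' - ρ) * ε ^ 2) ∧
      g (x K) ≤ 0 ∧ ‖xh (K + 1) - x K‖ ≤ ε / (ρ' * (1 + lam K)) :=
  outer_loop_convergence_KKT_general X ρ ρ' μ ε B τ flb hρρ' hρ' hμ hε hB hτ f g hflb x xh hx lam ζF
    ζG ν hg0 hlam hlamB hζF hζG hν heq hcomp hFnear hGnear
end
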